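/- arXiv:1511.06966 — 9 statements merged into one kernel-verified Lean document; each statement's English description precedes it below -/
import Mathlib

section
/- Let F be a field, V a finite-dimensional F-vector space, and L : V → V a linear map with invariant factor decomposition α₁(x), ..., α_t(x) (so V ≅ ⨁ᵢ F[x]/(αᵢ(x)) as F[x]-modules via L). For every positive integer r, the set of fixed points of L^r is a vector subspace of V of dimension ∑ᵢ deg(gcd(x^r − 1, αᵢ(x))). -/
/-!
Through `L`, the fixed space of `L ^ r` is the `(X ^ r - 1)`-torsion of the `F[X]`-module
`V`, and torsion is computed summand by summand. On `F[X] ⧸ (α)` the `p`-torsion equals the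
`g`-torsion for `g = gcd p α` (Bézout), and writing `α = g * c` this is the kernel of the
projection `F[X] ⧸ (α) → F[X] ⧸ (c)`, of dimension `deg α - deg c = deg g`.
-/

open Polynomial Submodule

section Torsion

variable {R M N : Type*} [CommSemiring R] [AddCommMonoid M] [Module R M] [AddCommMonoid N]
    [Module R N]

theorem Submodule.map_torsionBy_linearEquiv (e : M ≃ₗ[R] N) (a : R) :
    (torsionBy R M a).map (e : M →ₗ[R] N) = torsionBy R N a := by
  ext y
  rw [mem_map_equiv, mem_torsionBy_iff, mem_torsionBy_iff, ← map_smul,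
    LinearEquiv.map_eq_zero_iff]

def LinearEquiv.torsionByCongr (e : M ≃ₗ[R] N) (a : R) :
    torsionBy R M a ≃ₗ[R] torsionBy R N a :=
  e.ofSubmodules _ _ (map_torsionBy_linearEquiv e a)

def Submodule.torsionByPiEquiv {ι : Type*} (M : ι → Type*) [∀ i, AddCommMonoid (M i)]
    [∀ i, Module R (M i)] (a : R) :
    torsionBy R (∀ i, M i) a ≃ₗ[R] ∀ i, torsionBy R (M i) a where
  toFun x i := ⟨x.1 i, congr_fun x.2 i⟩
  invFun y := ⟨fun i => y i, funext fun i => (y i).2⟩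
  map_add' _ _ := rfl
  map_smul' _ _ := rfl
  left_inv _ := rfl
  right_inv _ := rfl

end Torsion

theorem Submodule.torsionBy_eq_torsionBy_gcd {R M : Type*} [EuclideanDomain R] [DecidableEq R]
    [AddCommGroup M] [Module R M] {a b : R} (hb : Module.IsTorsionBy R M b) :
    torsionBy R M a = torsionBy R M (EuclideanDomain.gcd a b) := by
  refine le_antisymm (fun x hx => ?_) (torsionBy_le_torsionBy_of_dvd _ _
    (EuclideanDomain.gcd_dvd_left a b))
  rw [mem_torsionBy_iff] at hx ⊢
  rw [EuclideanDomain.gcd_eq_gcd_ab, add_smul, mul_comm, mul_smul, hx, mul_comm, mul_smul, hb,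
    smul_zero, smul_zero, add_zero]

theorem Ideal.isTorsionBy_quotient_span_singleton {R : Type*} [CommRing R] (a : R) :
    Module.IsTorsionBy R (R ⧸ Ideal.span {a}) a :=
  (Module.isTorsionBy_quotient_iff _ a).2 fun x =>
    Ideal.mul_mem_right x _ (Ideal.mem_span_singleton_self a)

section Field

variable {F : Type*} [Field F]

theorem finrank_torsionBy_quotient_span_singleton_of_dvd {g α : F[X]} (hα : α ≠ 0)
    (hg : g ∣ α) :
    Module.finrank F (torsionBy F[X] (F[X] ⧸ Ideal.span {α}) g) = g.natDegree := by
  obtain ⟨c, rfl⟩ := hg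
  have hg0 : g ≠ 0 := left_ne_zero_of_mul hα
  have hc0 : c ≠ 0 := right_ne_zero_of_mul hα
  have hle : Ideal.span {g * c} ≤ Ideal.span {c} :=
    Ideal.span_singleton_le_span_singleton.2 (dvd_mul_left c g)
  set π := (Ideal.Quotient.factorₐ F hle).toLinearMap
  have hker :
      (torsionBy F[X] (F[X] ⧸ Ideal.span {g * c}) g).restrictScalars F = LinearMap.ker π := by
    ext x
    obtain ⟨q, rfl⟩ := Ideal.Quotient.mk_surjective x
    change Ideal.Quotient.mk _ (g * q) = 0 ↔ Ideal.Quotient.mk _ q = 0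
    rw [Ideal.Quotient.eq_zero_iff_mem, Ideal.Quotient.eq_zero_iff_mem, Ideal.mem_span_singleton,
      Ideal.mem_span_singleton, mul_dvd_mul_iff_left hg0]
  have : Module.Finite F (F[X] ⧸ Ideal.span {g * c}) := (AdjoinRoot.powerBasis hα).finite
  have hrank := π.finrank_range_add_finrank_ker
  rw [LinearMap.range_eq_top.2 (Ideal.Quotient.factor_surjective hle), finrank_top, ← hker,
    finrank_quotient_span_eq_natDegree, finrank_quotient_span_eq_natDegree,
    natDegree_mul hg0 hc0] at hrank
  change Module.finrank F ((torsionBy F[X] (F[X] ⧸ Ideal.span {g * c}) g).restrictScalars F) = _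
  omega

theorem finrank_torsionBy_quotient_span_singleton [DecidableEq F[X]] (p : F[X]) {α : F[X]}
    (hα : α ≠ 0) :
    Module.finrank F (torsionBy F[X] (F[X] ⧸ Ideal.span {α}) p) =
      (EuclideanDomain.gcd p α).natDegree := by
  rw [torsionBy_eq_torsionBy_gcd (Ideal.isTorsionBy_quotient_span_singleton α)]
  exact finrank_torsionBy_quotient_span_singleton_of_dvd hα (EuclideanDomain.gcd_dvd_right p α)

theorem finrank_torsionBy_directSum_quotient [DecidableEq F[X]] {ι : Type*} [Fintype ι]
    [DecidableEq ι] (p : F[X]) {α : ι → F[X]} (hα : ∀ i, α i ≠ 0) :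
    Module.finrank F (torsionBy F[X] (DirectSum ι fun i => F[X] ⧸ Ideal.span {α i}) p) =
      ∑ i, (EuclideanDomain.gcd p (α i)).natDegree := by
  have (i : ι) : Module.Finite F (torsionBy F[X] (F[X] ⧸ Ideal.span {α i}) p) :=
    have : Module.Finite F (F[X] ⧸ Ideal.span {α i}) := (AdjoinRoot.powerBasis (hα i)).finite
    FiniteDimensional.finiteDimensional_submodule ((torsionBy F[X] _ p).restrictScalars F)
  have (i : ι) : Module.Free F (torsionBy F[X] (F[X] ⧸ Ideal.span {α i}) p) :=
    Module.Free.of_divisionRing F _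
  let e := ((DirectSum.linearEquivFunOnFintype F[X] ι fun i => F[X] ⧸ Ideal.span {α i}
    ).torsionByCongr p).trans (torsionByPiEquiv _ p)
  rw [(e.restrictScalars F).finrank_eq, Module.finrank_pi_fintype]
  exact Finset.sum_congr rfl fun i _ => finrank_torsionBy_quotient_span_singleton p (hα i)

theorem Module.AEval'.finrank_torsionBy {V : Type*} [AddCommGroup V] [Module F V]
    (f : V →ₗ[F] V) (p : F[X]) :
    Module.finrank F (torsionBy F[X] (AEval' f) p) =
      Module.finrank F (LinearMap.ker (aeval f p)) := by
  refine ((AEval'.of f).ofSubmodules _ ((torsionBy F[X] (AEval' f) p).restrictScalars F)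
    ?_).finrank_eq.symm
  ext m
  rw [mem_map_equiv, restrictScalars_mem, mem_torsionBy_iff, LinearMap.mem_ker,
    ← (AEval'.of f).symm.map_eq_zero_iff, AEval.of_symm_smul]
  rfl

end Field

open scoped Classical in
theorem stmt1_general {F : Type*} [Field F] {V : Type*} [AddCommGroup V] [Module F V]
    (L : V →ₗ[F] V) (t : ℕ) (α : Fin t → Polynomial F)
    (hmonic : ∀ i, (α i).Monic)
    (e : Module.AEval' L ≃ₗ[Polynomial F]
      DirectSum (Fin t) (fun i => Polynomial F ⧸ Ideal.span {α i}))
    (r : ℕ) :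
    Module.finrank F (LinearMap.ker (L ^ r - LinearMap.id)) =
      ∑ i : Fin t, (EuclideanDomain.gcd (X ^ r - 1) (α i)).natDegree := by
  have hfix : L ^ r - LinearMap.id = aeval L (X ^ r - 1 : F[X]) := by simp [Module.End.one_eq_id]
  rw [hfix, ← Module.AEval'.finrank_torsionBy,
    ((e.torsionByCongr _).restrictScalars F).finrank_eq]
  exact finrank_torsionBy_directSum_quotient _ fun i => (hmonic i).ne_zero

open scoped Classical in
theorem stmt1 {F : Type*} [Field F] {V : Type*} [AddCommGroup V] [Module F V]
    [FiniteDimensional F V] (L : V →ₗ[F] V) (t : ℕ) (α : Fin t → Polynomial F)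
    (hmonic : ∀ i, (α i).Monic)
    (hdvd : ∀ i j : Fin t, i ≤ j → α i ∣ α j)
    (e : Module.AEval' L ≃ₗ[Polynomial F]
      DirectSum (Fin t) (fun i => Polynomial F ⧸ Ideal.span {α i}))
    (r : ℕ) (hr : 0 < r) :
    Module.finrank F (LinearMap.ker (L ^ r - LinearMap.id)) =
      ∑ i : Fin t, (EuclideanDomain.gcd (X ^ r - 1) (α i)).natDegree :=
  stmt1_general L t α hmonic e r
end

section
/- Let n ≥ 3 and let L_n : 𝔽₂ⁿ → 𝔽₂ⁿ be given by L_n(y₁,...,y_n) = (y₁+y₂+y_n, y₁+y₃+y_n, ..., y₁+y_{n−1}+y_n, y₁, y₂). Define ι_n : 𝔽₂ⁿ → 𝔽₂^{2n−2} by ι_n(a₁,...,a_n) = (a₁,...,a_n, a₁+a₂+a_n, a₁+a₃+a_n, ..., a₁+a_{n−1}+a_n), and define the shift σ : 𝔽₂^{2n−2} → 𝔽₂^{2n−2} by σ(a₁,...,a_{2n−2}) = (a_{n+1},...,a_{2n−2}, a₁,...,a_n). Then ι_n is an injective 𝔽₂-linear map satisfying ι_n ∘ L_n = σ ∘ ι_n.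 -/
/-- The SDS map `[C_n, parity₃, id]` as an `𝔽₂`-linear map on `𝔽₂ⁿ` (`n ≥ 3`). -/
def Lmap (n : ℕ) (hn : 3 ≤ n) : (Fin n → ZMod 2) →ₗ[ZMod 2] (Fin n → ZMod 2) where
  toFun y i :=
    if h : (i : ℕ) < n - 2 then
      y ⟨0, by omega⟩ + y ⟨(i : ℕ) + 1, by omega⟩ + y ⟨n - 1, by omega⟩
    else if (i : ℕ) = n - 2 then y ⟨0, by omega⟩ else y ⟨1, by omega⟩
  map_add' x y := by
    funext i; simp only [Pi.add_apply]; split_ifs <;> ring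
  map_smul' c x := by
    funext i; simp only [Pi.smul_apply, smul_eq_mul, RingHom.id_apply]; split_ifs <;> ring

/-- The map `ι_n : 𝔽₂ⁿ → 𝔽₂^{2n−2}`. -/
def iota (n : ℕ) (hn : 3 ≤ n) : (Fin n → ZMod 2) →ₗ[ZMod 2] (Fin (2 * n - 2) → ZMod 2) where
  toFun a j :=
    if h : (j : ℕ) < n then a ⟨(j : ℕ), h⟩
    else a ⟨0, by omega⟩ + a ⟨(j : ℕ) - n + 1, by have := j.isLt; omega⟩ + a ⟨n - 1, by omega⟩
  map_add' x y := by
    funext j; simp only [Pi.add_apply]; split_ifs <;> ring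
  map_smul' c x := by
    funext j; simp only [Pi.smul_apply, smul_eq_mul, RingHom.id_apply]; split_ifs <;> ring

/-- The shift map `σ` on `𝔽₂^{2n−2}`, sending `(a₁,…,a_{2n−2})` to
`(a_{n+1},…,a_{2n−2},a₁,…,a_n)`. -/
def shiftMap (n : ℕ) (a : Fin (2 * n - 2) → ZMod 2) : Fin (2 * n - 2) → ZMod 2 :=
  fun j => a ⟨((j : ℕ) + n) % (2 * n - 2), Nat.mod_lt _ j.pos⟩

/-!
The first `n` coordinates of `ι_n a` are `a` itself, whence injectivity. The coordinates of
`σ (ι_n a)` are those of `ι_n a` read from position `n` on, cyclically, and its first `n` of them are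
exactly `L_n a`. Comparing the last `n - 2` coordinates of `ι_n (L_n a)` with those of `σ (ι_n a)`
is then a computation in characteristic 2, with one case (the last coordinate) that wraps around.
-/

theorem shiftMap_apply_of_lt {n : ℕ} (b : Fin (2 * n - 2) → ZMod 2) (j : Fin (2 * n - 2))
    (hj : (j : ℕ) < n - 2) : shiftMap n b j = b ⟨j + n, by omega⟩ := by
  simp only [shiftMap, Nat.mod_eq_of_lt (show (j : ℕ) + n < 2 * n - 2 by omega)]

theorem shiftMap_apply_of_ge {n : ℕ} (b : Fin (2 * n - 2) → ZMod 2) (j : Fin (2 * n - 2))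
    (hj : n - 2 ≤ (j : ℕ)) : shiftMap n b j = b ⟨j - (n - 2), by omega⟩ := by
  have hmod : ((j : ℕ) + n) % (2 * n - 2) = j - (n - 2) := by
    rw [Nat.mod_eq_sub_mod (by omega), Nat.mod_eq_of_lt (by omega)]
    omega
  simp only [shiftMap, hmod]

section

variable {n : ℕ} (hn : 3 ≤ n)

theorem iota_apply_of_lt (a : Fin n → ZMod 2) (j : Fin (2 * n - 2)) (hj : (j : ℕ) < n) :
    iota n hn a j = a ⟨j, hj⟩ :=
  dif_pos hj

theorem iota_apply_of_ge (a : Fin n → ZMod 2) (j : Fin (2 * n - 2)) (hj : n ≤ (j : ℕ)) :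
    iota n hn a j = a ⟨0, by omega⟩ + a ⟨j - n + 1, by omega⟩ + a ⟨n - 1, by omega⟩ :=
  dif_neg (by omega)

theorem iota_injective : Function.Injective (iota n hn) := by
  intro a b hab
  funext i
  have hi := congrFun hab ⟨i, by omega⟩
  rwa [iota_apply_of_lt hn _ _ i.isLt, iota_apply_of_lt hn _ _ i.isLt] at hi

theorem shiftMap_iota_apply_of_lt (a : Fin n → ZMod 2) (j : Fin (2 * n - 2))
    (hj : (j : ℕ) < n - 2) :
    shiftMap n (iota n hn a) j = a ⟨0, by omega⟩ + a ⟨j + 1, by omega⟩ + a ⟨n - 1, by omega⟩ := by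
  rw [shiftMap_apply_of_lt _ _ hj, iota_apply_of_ge hn _ _ (by simp)]
  simp only [Nat.add_sub_cancel]

theorem shiftMap_iota_apply_of_ge (a : Fin n → ZMod 2) (j : Fin (2 * n - 2))
    (hj : n - 2 ≤ (j : ℕ)) : shiftMap n (iota n hn a) j = a ⟨j - (n - 2), by omega⟩ := by
  rw [shiftMap_apply_of_ge _ _ hj, iota_apply_of_lt hn _ _ (by simp; omega)]

theorem Lmap_apply_eq_shiftMap_iota (a : Fin n → ZMod 2) (i : Fin n) :
    Lmap n hn a i = shiftMap n (iota n hn a) ⟨i, by omega⟩ := by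
  by_cases hi : (i : ℕ) < n - 2
  · rw [shiftMap_iota_apply_of_lt hn _ _ hi]
    exact dif_pos hi
  · rw [shiftMap_iota_apply_of_ge hn _ _ (by simpa using hi)]
    simp only [Lmap, LinearMap.coe_mk, AddHom.coe_mk, dif_neg hi]
    split_ifs with hi'
    · simp only [hi', Nat.sub_self]
    · simp only [show (i : ℕ) - (n - 2) = 1 by omega]

theorem iota_Lmap_eq_shiftMap_iota (a : Fin n → ZMod 2) :
    iota n hn (Lmap n hn a) = shiftMap n (iota n hn a) := by
  funext j
  rcases lt_or_ge (j : ℕ) n with hj | hj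
  · rw [iota_apply_of_lt hn _ _ hj, Lmap_apply_eq_shiftMap_iota]
  simp only [iota_apply_of_ge hn _ _ hj, Lmap_apply_eq_shiftMap_iota]
  rw [shiftMap_iota_apply_of_lt hn a ⟨0, by omega⟩ (by simp only; omega),
    shiftMap_iota_apply_of_ge hn a ⟨n - 1, by omega⟩ (by simp only; omega),
    shiftMap_iota_apply_of_ge hn a j (by omega)]
  rcases lt_or_ge ((j : ℕ) - n + 1) (n - 2) with hj' | hj'
  · rw [shiftMap_iota_apply_of_lt hn a ⟨j - n + 1, by omega⟩ hj']
    simp only [zero_add, show (j : ℕ) - n + 1 + 1 = j - (n - 2) by omega,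
      show n - 1 - (n - 2) = 1 by omega]
    grind
  -- wrap-around: `j = 2n - 3`
  · rw [shiftMap_iota_apply_of_ge hn a ⟨j - n + 1, by omega⟩ hj']
    simp only [zero_add, show (j : ℕ) - n + 1 - (n - 2) = 0 by omega,
      show (j : ℕ) - (n - 2) = n - 1 by omega, show n - 1 - (n - 2) = 1 by omega]
    grind

end

/-- `ι_n` is an injective `𝔽₂`-linear map with `ι_n ∘ L_n = σ ∘ ι_n`. -/
theorem stmt4 (n : ℕ) (hn : 3 ≤ n) :
    Function.Injective (iota n hn) ∧
      ∀ a : Fin n → ZMod 2, iota n hn (Lmap n hn a) = shiftMap n (iota n hn a) :=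
  ⟨iota_injective hn, iota_Lmap_eq_shiftMap_iota hn⟩
end

section
/- Let n ≥ 3 and let L_n : 𝔽₂ⁿ → 𝔽₂ⁿ be defined by L_n(y₁,...,y_n) = (y₁+y₂+y_n, y₁+y₃+y_n, ..., y₁+y_{n−1}+y_n, y₁, y₂). If L_n has a periodic point of period r, then r divides 2n−2; moreover, if n is even, then r divides n−1. -/
def orbitSeq (n : ℕ) (hn : 3 ≤ n) (y : Fin n → ZMod 2) (m : ℕ) : ZMod 2 :=
  if h : m % (2 * n - 2) < n then y ⟨m % (2 * n - 2), h⟩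
  else
    y ⟨0, by omega⟩ +
      y ⟨m % (2 * n - 2) - (n - 1), by
        have := Nat.mod_lt m (show 0 < 2 * n - 2 by omega); omega⟩ +
      y ⟨n - 1, by omega⟩

section

variable {n : ℕ} (hn : 3 ≤ n) (y : Fin n → ZMod 2)

lemma Lmap_apply_of_lt {i : ℕ} (hi : i < n - 2) :
    Lmap n hn y ⟨i, by omega⟩ = y ⟨0, by omega⟩ + y ⟨i + 1, by omega⟩ + y ⟨n - 1, by omega⟩ :=
  dif_pos hi

lemma Lmap_apply_sub_two : Lmap n hn y ⟨n - 2, by omega⟩ = y ⟨0, by omega⟩ := by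
  simp [Lmap]

lemma Lmap_apply_sub_one : Lmap n hn y ⟨n - 1, by omega⟩ = y ⟨1, by omega⟩ := by
  simp only [Lmap, LinearMap.coe_mk, AddHom.coe_mk]
  rw [dif_neg (by omega), if_neg (by omega)]

lemma orbitSeq_periodic : Function.Periodic (orbitSeq n hn y) (2 * n - 2) := by
  intro m
  simp only [orbitSeq, Nat.add_mod_right]

lemma orbitSeq_of_lt {m : ℕ} (hm : m < n) : orbitSeq n hn y m = y ⟨m, hm⟩ := by
  have hmod : m % (2 * n - 2) = m := Nat.mod_eq_of_lt (by omega)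
  simp only [orbitSeq, hmod, dif_pos hm]

lemma orbitSeq_sub_one_add {t : ℕ} (ht₀ : 1 ≤ t) (ht : t ≤ n - 2) :
    orbitSeq n hn y (n - 1 + t) = y ⟨0, by omega⟩ + y ⟨t, by omega⟩ + y ⟨n - 1, by omega⟩ := by
  have hmod : (n - 1 + t) % (2 * n - 2) = n - 1 + t := Nat.mod_eq_of_lt (by omega)
  simp only [orbitSeq, hmod, dif_neg (show ¬n - 1 + t < n by omega), Nat.add_sub_cancel_left]

lemma orbitSeq_Lmap_of_lt {m : ℕ} (hm : m < 2 * n - 2) :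
    orbitSeq n hn (Lmap n hn y) m = orbitSeq n hn y (m + n) := by
  have hper := orbitSeq_periodic hn y
  rcases lt_or_ge m (n - 2) with hm' | hm'
  · rw [orbitSeq_of_lt hn _ (by omega), show m + n = n - 1 + (m + 1) by omega,
      orbitSeq_sub_one_add hn y (by omega) (by omega), Lmap_apply_of_lt hn y hm']
  rcases lt_or_ge m n with hmn | hmn
  · obtain rfl | rfl : m = n - 2 ∨ m = n - 1 := by omega
    · rw [orbitSeq_of_lt hn _ hmn, Lmap_apply_sub_two, show n - 2 + n = 0 + (2 * n - 2) by omega,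
        hper, orbitSeq_of_lt hn y (by omega)]
    · rw [orbitSeq_of_lt hn _ hmn, Lmap_apply_sub_one, show n - 1 + n = 1 + (2 * n - 2) by omega,
        hper, orbitSeq_of_lt hn y (by omega)]
  obtain ⟨t, rfl⟩ : ∃ t, m = n - 1 + t := ⟨m - (n - 1), by omega⟩
  have h2 : (2 : ZMod 2) = 0 := rfl
  rw [orbitSeq_sub_one_add hn _ (by omega) (by omega),
    show n - 1 + t + n = t + 1 + (2 * n - 2) by omega, hper, orbitSeq_of_lt hn y (by omega),
    Lmap_apply_sub_one, Lmap_apply_of_lt hn y (by omega)]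
  rcases lt_or_ge t (n - 2) with ht | ht
  · rw [Lmap_apply_of_lt hn y ht]
    linear_combination (y ⟨0, by omega⟩ + y ⟨1, by omega⟩ + y ⟨n - 1, by omega⟩) * h2
  · obtain rfl : t = n - 2 := by omega
    rw [Lmap_apply_sub_two,
      show (⟨n - 2 + 1, _⟩ : Fin n) = ⟨n - 1, by omega⟩ from Fin.ext (by simp only; omega)]
    linear_combination (y ⟨0, by omega⟩ + y ⟨1, by omega⟩) * h2

lemma orbitSeq_Lmap (m : ℕ) :
    orbitSeq n hn (Lmap n hn y) m = orbitSeq n hn y (m + n) := by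
  have hm : m % (2 * n - 2) < 2 * n - 2 := Nat.mod_lt m (by omega)
  rw [← (orbitSeq_periodic hn _).map_mod_nat, orbitSeq_Lmap_of_lt hn y hm,
    ← (orbitSeq_periodic hn y).map_mod_nat, Nat.mod_add_mod, (orbitSeq_periodic hn y).map_mod_nat]

lemma Lmap_iterate_apply (k : ℕ) (i : Fin n) :
    (Lmap n hn)^[k] y i = orbitSeq n hn y (i + k * n) := by
  induction k generalizing y with
  | zero => simp [orbitSeq_of_lt hn y i.isLt]
  | succ k ih => rw [Function.iterate_succ_apply, ih, orbitSeq_Lmap, add_assoc, add_one_mul]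

lemma isPeriodicPt_Lmap_of_dvd {k : ℕ} (hk : 2 * n - 2 ∣ k * n) :
    Function.IsPeriodicPt (Lmap n hn) k y := by
  obtain ⟨c, hc⟩ := hk
  funext i
  rw [Lmap_iterate_apply, hc, ← (orbitSeq_periodic hn y).map_mod_nat, Nat.add_mul_mod_self_left,
    (orbitSeq_periodic hn y).map_mod_nat, orbitSeq_of_lt hn y i.isLt]

end

theorem stmt5_general (n : ℕ) (hn : 3 ≤ n) (r : ℕ)
    (h : ∃ v : Fin n → ZMod 2, Function.minimalPeriod (Lmap n hn) v = r) :
    r ∣ 2 * n - 2 ∧ (Even n → r ∣ n - 1) := by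
  obtain ⟨v, rfl⟩ := h
  refine ⟨(isPeriodicPt_Lmap_of_dvd hn v (dvd_mul_right _ n)).minimalPeriod_dvd, ?_⟩
  rintro ⟨m, hm⟩
  refine (isPeriodicPt_Lmap_of_dvd hn v ⟨m, ?_⟩).minimalPeriod_dvd
  rw [show 2 * n - 2 = (n - 1) * 2 by omega, hm]
  ring

/-- If `L_n` has a periodic point of (exact) period `r`, then `r ∣ 2n−2`;
moreover if `n` is even then `r ∣ n−1`. -/
theorem stmt5 (n : ℕ) (hn : 3 ≤ n) (r : ℕ) (hr : 0 < r)
    (h : ∃ v : Fin n → ZMod 2, Function.minimalPeriod (Lmap n hn) v = r) :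
    r ∣ 2 * n - 2 ∧ (Even n → r ∣ n - 1) :=
  stmt5_general n hn r h
end

section
/- Let n ≥ 3 be even and let L_n : 𝔽₂ⁿ → 𝔽₂ⁿ be the linear map L_n(y₁,...,y_n) = (y₁+y₂+y_n, y₁+y₃+y_n, ..., y₁+y_{n−1}+y_n, y₁, y₂). Then the minimal polynomial of L_n is x^{n−1} − 1, and the invariant factor decomposition of L_n is (x+1), (x^{n−1} − 1). -/
open Polynomial

/-!
`L` permutes the `n - 1` vectors `e_{n-2}, e_{n-3}, …, e_1, e_0 + e_{n-1}` cyclically and, for even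
`n`, fixes `u = e_0 + e_2 + ⋯ + e_{n-2}`; together these vectors span `𝔽₂ⁿ`. So `𝔽₂ⁿ`, made an
`𝔽₂[x]`-module by `L`, is generated by `u`, killed by `x + 1`, and `e_{n-2}`, killed by
`x^{n-1} - 1`. The resulting surjection `𝔽₂[x]/(x+1) × 𝔽₂[x]/(x^{n-1}-1) → 𝔽₂ⁿ` is an
isomorphism by counting dimensions. As `x + 1 ∣ x^{n-1} - 1`, the annihilator of this module,
which is generated by the minimal polynomial, is `(x^{n-1} - 1)`.
-/

open Module

section

variable {K M : Type*} [Field K] [AddCommGroup M] [Module K[X] M] [Module K M]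
  [IsScalarTower K K[X] M] [FiniteDimensional K M]

theorem nonempty_linearEquiv_prod_quotient_of_span_eq_top {p q : K[X]} (hp : p ≠ 0) (hq : q ≠ 0)
    {u v : M} (hu : p • u = 0) (hv : q • v = 0) (hspan : Submodule.span K[X] {u, v} = ⊤)
    (hdim : p.natDegree + q.natDegree = finrank K M) :
    Nonempty (M ≃ₗ[K[X]] (K[X] ⧸ Ideal.span {p}) × (K[X] ⧸ Ideal.span {q})) := by
  let Φ : (K[X] ⧸ Ideal.span {p}) × (K[X] ⧸ Ideal.span {q}) →ₗ[K[X]] M :=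
    (Submodule.liftQSpanSingleton p (LinearMap.toSpanSingleton K[X] M u) hu).coprod
    (Submodule.liftQSpanSingleton q (LinearMap.toSpanSingleton K[X] M v) hv)
  have hsurj : Function.Surjective Φ := by
    rw [← LinearMap.range_eq_top, eq_top_iff, ← hspan, Submodule.span_le]
    rintro x (rfl | rfl)
    · exact ⟨(Submodule.Quotient.mk 1, 0), by
        simp only [Φ, LinearMap.coprod_apply, map_zero, add_zero]
        exact (Submodule.liftQSpanSingleton_apply _ _ _ _).trans (one_smul _ _)⟩
    · exact ⟨(0, Submodule.Quotient.mk 1), by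
        simp only [Φ, LinearMap.coprod_apply, map_zero, zero_add]
        exact (Submodule.liftQSpanSingleton_apply _ _ _ _).trans (one_smul _ _)⟩
  have : Module.Finite K (K[X] ⧸ Ideal.span {p}) := (AdjoinRoot.powerBasis hp).finite
  have : Module.Finite K (K[X] ⧸ Ideal.span {q}) := (AdjoinRoot.powerBasis hq).finite
  have hinj : Function.Injective (Φ.restrictScalars K) :=
    (LinearMap.injective_iff_surjective_of_finrank_eq_finrank
      (by rw [finrank_prod, finrank_quotient_span_eq_natDegree,
        finrank_quotient_span_eq_natDegree, hdim])).2 hsurj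
  exact ⟨(LinearEquiv.ofBijective Φ ⟨hinj, hsurj⟩).symm⟩

end

theorem minpoly_eq_of_linearEquiv_prod_quotient {K V N : Type*} [Field K] [AddCommGroup V]
    [Module K V] [AddCommGroup N] [Module K[X] N] {f : Module.End K V} {q : K[X]} (hq : q.Monic)
    (hN : q ∈ annihilator K[X] N) (e : AEval' f ≃ₗ[K[X]] N × (K[X] ⧸ Ideal.span {q})) :
    minpoly K f = q := by
  have hann : Ideal.span {minpoly K f} = Ideal.span {q} := by
    rw [span_minpoly_eq_annihilator, e.annihilator_eq, annihilator_prod,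
      Ideal.annihilator_quotient, inf_eq_right.2 ((Ideal.span_singleton_le_iff_mem _).2 hN)]
  have hassoc := Ideal.span_singleton_eq_span_singleton.1 hann
  have hint : IsIntegral K f := minpoly.ne_zero_iff.1 (hassoc.ne_zero_iff.2 hq.ne_zero)
  exact eq_of_monic_of_associated (minpoly.monic hint) hq hassoc

theorem Submodule.mem_of_single_mem_of_eq_zero {ι R : Type*} [Fintype ι] [DecidableEq ι]
    [Semiring R] {S : Submodule R (ι → R)} {s : Set ι} (hS : ∀ i ∈ s, Pi.single i 1 ∈ S) {y : ι → R}
    (hy : ∀ i ∉ s, y i = 0) : y ∈ S := by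
  rw [pi_eq_sum_univ' y]
  refine Submodule.sum_mem _ fun i _ => ?_
  by_cases hi : i ∈ s
  · exact S.smul_mem _ (hS i hi)
  · simp [hy i hi]

def altVec (n : ℕ) : Fin n → ZMod 2 := fun i => if (i : ℕ) % 2 = 0 then 1 else 0

/-- The cycle `e_{n-2} ↦ e_{n-3} ↦ ⋯ ↦ e_1 ↦ e_0 + e_{n-1} ↦ e_{n-2}` of `Lmap n`, indexed by
`k mod (n - 1)`. -/
def cycleVec (n k : ℕ) : Fin n → ZMod 2 := fun i =>
  if k % (n - 1) = n - 2 then (if (i : ℕ) = 0 ∨ (i : ℕ) = n - 1 then 1 else 0)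
  else if (i : ℕ) = n - 2 - k % (n - 1) then 1 else 0

section

variable {n : ℕ}

theorem cycleVec_sub_one : cycleVec n (n - 1) = cycleVec n 0 := by
  funext i
  simp [cycleVec]

theorem cycleVec_eq_single {i : Fin n} (h0 : (i : ℕ) ≠ 0) (hl : (i : ℕ) ≠ n - 1) :
    cycleVec n (n - 2 - i) = Pi.single i 1 := by
  funext j
  have := j.isLt
  simp only [cycleVec, Pi.single_apply, Fin.ext_iff,
    Nat.mod_eq_of_lt (show n - 2 - i < n - 1 by omega)]
  split_ifs <;> grind

theorem span_altVec_cycleVec (hn : 2 ≤ n) (hne : Even n) :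
    Submodule.span (ZMod 2) (insert (altVec n) (Set.range (cycleVec n))) = ⊤ := by
  set S := Submodule.span (ZMod 2) (insert (altVec n) (Set.range (cycleVec n)))
  have hc (k : ℕ) : cycleVec n k ∈ S := Submodule.subset_span (Set.mem_insert_of_mem _ ⟨k, rfl⟩)
  have hu : altVec n ∈ S := Submodule.subset_span (Set.mem_insert _ _)
  have hmid (y : Fin n → ZMod 2) (hy : ∀ i : Fin n, (i : ℕ) = 0 ∨ (i : ℕ) = n - 1 → y i = 0) :
      y ∈ S :=
    Submodule.mem_of_single_mem_of_eq_zero (s := {i : Fin n | (i : ℕ) ≠ 0 ∧ (i : ℕ) ≠ n - 1})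
      (fun i hi => cycleVec_eq_single hi.1 hi.2 ▸ hc _) (fun i hi => hy i (by grind))
  refine eq_top_iff.2 fun y _ => ?_
  set a := y ⟨0, by omega⟩
  set b := y ⟨n - 1, by omega⟩
  have hrest : y - ((a - b) • altVec n + b • cycleVec n (n - 2)) ∈ S := by
    refine hmid _ fun i hi => ?_
    have hmod : (n - 2) % (n - 1) = n - 2 := Nat.mod_eq_of_lt (by omega)
    obtain ⟨m, rfl⟩ := hne
    rcases hi with hi | hi
    · rw [show i = ⟨0, by omega⟩ from Fin.ext hi]
      simp [altVec, cycleVec, hmod, a]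
    · rw [show i = ⟨m + m - 1, by omega⟩ from Fin.ext hi]
      have hodd : (m + m - 1) % 2 = 1 := by omega
      simp [altVec, cycleVec, hmod, hodd, b]
  simpa using S.add_mem hrest (S.add_mem (S.smul_mem (a - b) hu) (S.smul_mem b (hc (n - 2))))

variable (hn : 3 ≤ n)

theorem Lmap_altVec (hne : Even n) : Lmap n hn (altVec n) = altVec n := by
  obtain ⟨m, rfl⟩ := hne
  funext i
  have hi := i.isLt
  simp only [Lmap, LinearMap.coe_mk, AddHom.coe_mk, altVec]
  split_ifs <;> grind

theorem Lmap_cycleVec (k : ℕ) : Lmap n hn (cycleVec n k) = cycleVec n (k + 1) := by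
  have hk := Nat.mod_lt k (show 0 < n - 1 by omega)
  have hsucc : (k + 1) % (n - 1) = (k % (n - 1) + 1) % (n - 1) := by
    rw [Nat.add_mod, Nat.mod_eq_of_lt (show 1 < n - 1 by omega)]
  funext i
  have hi := i.isLt
  by_cases hlast : k % (n - 1) = n - 2
  · rw [hlast, show n - 2 + 1 = n - 1 by omega, Nat.mod_self] at hsucc
    simp only [Lmap, LinearMap.coe_mk, AddHom.coe_mk, cycleVec, hlast, hsucc]
    split_ifs <;> grind
  · rw [Nat.mod_eq_of_lt (a := k % (n - 1) + 1) (by omega)] at hsucc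
    simp only [Lmap, LinearMap.coe_mk, AddHom.coe_mk, cycleVec, hlast, hsucc]
    split_ifs <;> grind

theorem Lmap_pow_cycleVec_zero (k : ℕ) : (Lmap n hn ^ k) (cycleVec n 0) = cycleVec n k := by
  induction k with
  | zero => rfl
  | succ k ih => rw [pow_succ', Module.End.mul_apply, ih, Lmap_cycleVec]

theorem X_add_one_smul_of_altVec (hne : Even n) :
    (X + 1 : (ZMod 2)[X]) • AEval'.of (Lmap n hn) (altVec n) = 0 := by
  rw [add_smul, one_smul, AEval'.X_smul_of, Lmap_altVec hn hne, ← two_smul (ZMod 2),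
    show (2 : ZMod 2) = 0 from rfl, zero_smul]

theorem X_pow_sub_one_smul_of_cycleVec :
    (X ^ (n - 1) - 1 : (ZMod 2)[X]) • AEval'.of (Lmap n hn) (cycleVec n 0) = 0 := by
  rw [sub_smul, one_smul, AEval'.X_pow_smul_of, Module.End.smul_def, Lmap_pow_cycleVec_zero,
    cycleVec_sub_one, sub_self]

theorem span_of_altVec_of_cycleVec (hne : Even n) :
    Submodule.span (ZMod 2)[X]
      {AEval'.of (Lmap n hn) (altVec n), AEval'.of (Lmap n hn) (cycleVec n 0)} = ⊤ := by
  set T := Submodule.span (ZMod 2)[X]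
    {AEval'.of (Lmap n hn) (altVec n), AEval'.of (Lmap n hn) (cycleVec n 0)}
  have hle : Submodule.span (ZMod 2) (insert (altVec n) (Set.range (cycleVec n))) ≤
      (T.restrictScalars (ZMod 2)).comap (AEval'.of (Lmap n hn)).toLinearMap := by
    rw [Submodule.span_le]
    rintro _ (rfl | ⟨k, rfl⟩)
    · show AEval'.of _ (altVec n) ∈ T
      exact Submodule.subset_span (by simp)
    · show AEval'.of _ (cycleVec n k) ∈ T
      rw [← Lmap_pow_cycleVec_zero hn k, ← Module.End.smul_def, ← AEval'.X_pow_smul_of]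
      exact T.smul_mem _ (Submodule.subset_span (by simp))
  rw [span_altVec_cycleVec (by omega) hne, top_le_iff] at hle
  refine eq_top_iff.2 fun x _ => ?_
  have hx := Submodule.mem_top (R := ZMod 2) (x := (AEval'.of (Lmap n hn)).symm x)
  rw [← hle] at hx
  simpa using hx

end

/-- For even `n ≥ 3`, the minimal polynomial of `L_n` is `x^{n−1} − 1`,
and the invariant factor decomposition of `L_n` is `(x+1), (x^{n−1} − 1)`. -/
theorem stmt6 (n : ℕ) (hn : 3 ≤ n) (hne : Even n) :
    minpoly (ZMod 2) (Lmap n hn) = X ^ (n - 1) - 1 ∧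
    Nonempty (Module.AEval' (Lmap n hn) ≃ₗ[Polynomial (ZMod 2)]
      (Polynomial (ZMod 2) ⧸ Ideal.span {(X + 1 : Polynomial (ZMod 2))}) ×
        (Polynomial (ZMod 2) ⧸ Ideal.span {(X ^ (n - 1) - 1 : Polynomial (ZMod 2))})) := by
  have hq : (X ^ (n - 1) - 1 : (ZMod 2)[X]).Monic := by
    simpa using monic_X_pow_sub_C (1 : ZMod 2) (show n - 1 ≠ 0 by omega)
  have hdeg :
      (X + 1 : (ZMod 2)[X]).natDegree + (X ^ (n - 1) - 1 : (ZMod 2)[X]).natDegree = n := by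
    rw [show (X + 1 : (ZMod 2)[X]) = X + C 1 by simp, natDegree_X_add_C,
      show (X ^ (n - 1) - 1 : (ZMod 2)[X]) = X ^ (n - 1) - C 1 by simp, natDegree_X_pow_sub_C]
    omega
  obtain ⟨e⟩ := nonempty_linearEquiv_prod_quotient_of_span_eq_top
    (by simpa using X_add_C_ne_zero (1 : ZMod 2)) hq.ne_zero (X_add_one_smul_of_altVec hn hne)
    (X_pow_sub_one_smul_of_cycleVec hn) (span_of_altVec_of_cycleVec hn hne)
    (by rw [← (AEval'.of (Lmap n hn)).finrank_eq, finrank_fin_fun, hdeg])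
  refine ⟨minpoly_eq_of_linearEquiv_prod_quotient hq ?_ e, ⟨e⟩⟩
  rw [Ideal.annihilator_quotient, Ideal.mem_span_singleton, ← CharTwo.sub_eq_add]
  exact sub_one_dvd_pow_sub_one X (n - 1)
end

section
/- Let n ≥ 3 be odd and let L_n : 𝔽₂ⁿ → 𝔽₂ⁿ be the linear map L_n(y₁,...,y_n) = (y₁+y₂+y_n, y₁+y₃+y_n, ..., y₁+y_{n−1}+y_n, y₁, y₂). Then the minimal polynomial of L_n equals its characteristic polynomial, namely (x+1)(x^{n−1} − 1); equivalently, L_n has a single invariant factor. -/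
/-!
The vector `e₀` is cyclic for `L_n`. The iterates `L_n ^ k e₀`, `k < n`, have an explicit
closed form (for odd `k` an initial, for even `k > 0` a final segment of ones). The sum of
coordinates `i` and `i + 1` vanishes on all of them except `k = n - 1 - i`, which isolates the
middle iterates; for odd `n` the last one is then read off coordinate `n - 1` and `e₀` off
coordinate `0`, so they are linearly independent.
For a cyclic vector `v` of `f`, no nonzero polynomial of degree `< dim V` kills `v`, so the
minimal polynomial has full degree and equals the characteristic polynomial; moreover
`q ↦ q(f) v` identifies `V` as a `K[X]`-module with `K[X] ⧸ (minpoly f)`. Finally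
`L_n ^ n e₀ = L_n ^ (n - 1) e₀ + L_n e₀ + e₀`, and over `𝔽₂` the polynomial
`Xⁿ + Xⁿ⁻¹ + X + 1` is `(X + 1)(Xⁿ⁻¹ - 1)`.
-/

open Polynomial

open Module

theorem Polynomial.X_add_one_mul_X_pow_sub_one {R : Type*} [CommRing R] [CharP R 2] (m : ℕ) :
    (X + 1 : R[X]) * (X ^ m - 1) = X ^ (m + 1) + X ^ m + X + 1 := by
  rw [CharTwo.sub_eq_add]
  ring

theorem Polynomial.monic_X_add_one_mul_X_pow_sub_one {R : Type*} [CommRing R] [Nontrivial R]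
    {m : ℕ} (hm : m ≠ 0) : ((X + 1 : R[X]) * (X ^ m - 1)).Monic := by
  rw [← C_1]
  exact (monic_X_add_C 1).mul (monic_X_pow_sub_C 1 hm)

theorem Polynomial.natDegree_X_add_one_mul_X_pow_sub_one {R : Type*} [CommRing R]
    [Nontrivial R] {m : ℕ} (hm : m ≠ 0) : ((X + 1 : R[X]) * (X ^ m - 1)).natDegree = m + 1 := by
  rw [← C_1, (monic_X_add_C 1).natDegree_mul (monic_X_pow_sub_C 1 hm), natDegree_X_add_C,
    natDegree_X_pow_sub_C, add_comm]

namespace Module.End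

variable {K V : Type*} [Field K] [AddCommGroup V] [Module K V] {f : Module.End K V} {v : V}

theorem eq_zero_of_degree_lt_of_aeval_apply_eq_zero {m : ℕ}
    (hv : LinearIndependent K fun k : Fin m => (f ^ (k : ℕ)) v) {q : K[X]}
    (hq : q.degree < m) (h : aeval f q v = 0) : q = 0 := by
  by_contra hq0
  have hlt : q.natDegree < m := (natDegree_lt_iff_degree_lt hq0).2 hq
  have hcoeff : ∀ k : Fin m, q.coeff k = 0 := by
    refine Fintype.linearIndependent_iff.1 hv _ ?_
    rw [← h, aeval_eq_sum_range' hlt, LinearMap.sum_apply, ← Fin.sum_univ_eq_sum_range]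
    rfl
  exact hq0 (ext fun j => (lt_or_ge j m).elim (fun hj => hcoeff ⟨j, hj⟩)
    fun hj => coeff_eq_zero_of_natDegree_lt (hlt.trans_le hj))

/-- In finite dimension this is equivalent to `v, f v, f² v, …` spanning `V`. -/
def IsCyclicVector (f : Module.End K V) (v : V) : Prop :=
  LinearIndependent K fun k : Fin (finrank K V) => (f ^ (k : ℕ)) v

namespace IsCyclicVector

variable [FiniteDimensional K V] (hv : f.IsCyclicVector v)
include hv

theorem finrank_le_natDegree_minpoly : finrank K V ≤ (minpoly K f).natDegree := by
  by_contra! hlt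
  refine minpoly.ne_zero (LinearMap.isIntegral f) (eq_zero_of_degree_lt_of_aeval_apply_eq_zero hv ?_ ?_)
  · exact degree_le_natDegree.trans_lt (by exact_mod_cast hlt)
  · rw [minpoly.aeval, LinearMap.zero_apply]

theorem minpoly_eq_charpoly : minpoly K f = f.charpoly :=
  (eq_of_monic_of_dvd_of_natDegree_le (minpoly.monic (LinearMap.isIntegral f))
    f.charpoly_monic (LinearMap.minpoly_dvd_charpoly f)
    (by rw [LinearMap.charpoly_natDegree]; exact hv.finrank_le_natDegree_minpoly)).symm

theorem natDegree_minpoly : (minpoly K f).natDegree = finrank K V := by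
  rw [hv.minpoly_eq_charpoly, LinearMap.charpoly_natDegree]

theorem minpoly_dvd_iff {q : K[X]} : minpoly K f ∣ q ↔ aeval f q v = 0 := by
  have hmonic := minpoly.monic (LinearMap.isIntegral f)
  rw [← modByMonic_eq_zero_iff_dvd hmonic, ← minpoly.aeval_modByMonic_minpoly]
  refine ⟨fun h => by rw [h, map_zero, LinearMap.zero_apply], fun h => ?_⟩
  refine eq_zero_of_degree_lt_of_aeval_apply_eq_zero hv ?_ h
  rw [← hv.natDegree_minpoly, ← degree_eq_natDegree hmonic.ne_zero]
  exact degree_modByMonic_lt q hmonic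

theorem minpoly_eq {p : K[X]} (hp : p.Monic) (hdeg : p.natDegree = finrank K V)
    (h : aeval f p v = 0) : minpoly K f = p :=
  (eq_of_monic_of_dvd_of_natDegree_le (minpoly.monic (LinearMap.isIntegral f)) hp
    (hv.minpoly_dvd_iff.2 h) (by rw [hdeg, hv.natDegree_minpoly])).symm

theorem ker_toSpanSingleton :
    LinearMap.ker (LinearMap.toSpanSingleton K[X] _ (AEval'.of f v)) =
      Ideal.span {minpoly K f} := by
  ext q
  rw [LinearMap.mem_ker, LinearMap.toSpanSingleton_apply, ← Module.AEval.of_aeval_smul,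
    LinearEquiv.map_eq_zero_iff, Ideal.mem_span_singleton, hv.minpoly_dvd_iff]
  rfl

theorem toSpanSingleton_surjective :
    Function.Surjective (LinearMap.toSpanSingleton K[X] _ (AEval'.of f v)) := by
  intro x
  have hx : (AEval'.of f).symm x ∈
      Submodule.span K (Set.range fun k : Fin (finrank K V) => (f ^ (k : ℕ)) v) := by
    rw [hv.span_eq_top_of_card_eq_finrank' (Fintype.card_fin _)]
    trivial
  obtain ⟨c, hc⟩ := (Submodule.mem_span_range_iff_exists_fun K).1 hx
  refine ⟨∑ k, c k • X ^ (k : ℕ), ?_⟩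
  rw [LinearMap.toSpanSingleton_apply, ← Module.AEval.of_aeval_smul,
    ← LinearEquiv.eq_symm_apply, ← hc]
  simp

theorem nonempty_aeval'_equiv_quotient_minpoly :
    Nonempty (AEval' f ≃ₗ[K[X]] K[X] ⧸ Ideal.span {minpoly K f}) :=
  ⟨(LinearMap.quotKerEquivOfSurjective _ hv.toSpanSingleton_surjective).symm.trans
    (Submodule.quotEquivOfEq _ _ hv.ker_toSpanSingleton)⟩

end IsCyclicVector

end Module.End

namespace Lmap

/-- The iterates `L_n ^ k e₀`, `k < n`, in closed form. -/
def orbit (n k : ℕ) (i : Fin n) : ZMod 2 :=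
  if k = 0 then (if (i : ℕ) = 0 then 1 else 0)
  else if k % 2 = 1 then (if (i : ℕ) + k < n then 1 else 0)
  else (if n ≤ (i : ℕ) + k then 1 else 0)

variable {n : ℕ} (hn : 3 ≤ n)

theorem apply_orbit {k : ℕ} (hk : k + 1 < n) : Lmap n hn (orbit n k) = orbit n (k + 1) := by
  funext i
  have := i.isLt
  simp only [Lmap, LinearMap.coe_mk, AddHom.coe_mk, orbit]
  split_ifs <;> first | rfl | contradiction | omega

theorem pow_apply_orbit_zero {k : ℕ} (hk : k < n) :
    (Lmap n hn ^ k) (orbit n 0) = orbit n k := by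
  induction k with
  | zero => rfl
  | succ k ih => rw [pow_succ', Module.End.mul_apply, ih (by omega), apply_orbit hn hk]

theorem apply_orbit_last (hno : n % 2 = 1) :
    Lmap n hn (orbit n (n - 1)) + orbit n (n - 1) + orbit n 1 + orbit n 0 = 0 := by
  funext i
  have := i.isLt
  have hne : n - 1 ≠ 0 := by omega
  have heven : (n - 1) % 2 ≠ 1 := by omega
  simp only [Lmap, LinearMap.coe_mk, AddHom.coe_mk, orbit, Pi.add_apply, Pi.zero_apply, hne,
    heven, one_ne_zero, Nat.one_mod, if_true, if_false]
  split_ifs <;> first | rfl | contradiction | omega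

theorem orbit_add_orbit {k : ℕ} (hk : k < n) {i j : Fin n} (hi : 0 < (i : ℕ))
    (hj : (j : ℕ) = i + 1) :
    orbit n k i + orbit n k j = if (i : ℕ) + k = n - 1 then 1 else 0 := by
  simp only [orbit]
  split_ifs <;> first | rfl | contradiction | omega

theorem eq_zero_of_sum_mul_orbit_eq_zero {g : Fin n → ZMod 2}
    (hg : ∀ i, ∑ k, g k * orbit n k i = 0) (k : Fin n) (hk0 : 0 < (k : ℕ))
    (hk1 : (k : ℕ) + 1 < n) : g k = 0 := by
  have h := congr($(hg ⟨n - 1 - k, by omega⟩) + $(hg ⟨n - k, by omega⟩))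
  rw [← Finset.sum_add_distrib, add_zero, Finset.sum_eq_single k] at h
  · rwa [← mul_add, orbit_add_orbit k.isLt (by dsimp only; omega)
      (by dsimp only; omega), if_pos (by dsimp only; omega), mul_one] at h
  · intro b _ hb
    rw [← mul_add, orbit_add_orbit b.isLt (by dsimp only; omega)
      (by dsimp only; omega), if_neg (by dsimp only; omega), mul_zero]
  · simp

theorem linearIndependent_orbit (hno : n % 2 = 1) :
    LinearIndependent (ZMod 2) fun k : Fin n => orbit n k := by
  rw [Fintype.linearIndependent_iff]
  intro g hg
  have coord (i : Fin n) : ∑ k, g k * orbit n k i = 0 := by simpa using congrFun hg i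
  have middle := eq_zero_of_sum_mul_orbit_eq_zero coord
  have last : g ⟨n - 1, by omega⟩ = 0 := by
    have hlast : orbit n (n - 1) ⟨n - 1, by omega⟩ = 1 := by
      simp only [orbit]
      split_ifs <;> first | rfl | omega
    have h := coord ⟨n - 1, by omega⟩
    rwa [Finset.sum_eq_single ⟨n - 1, by omega⟩, hlast, mul_one] at h
    · intro b _ hb
      simp only [ne_eq, Fin.ext_iff] at hb
      rcases Nat.eq_zero_or_pos (b : ℕ) with hb0 | hb0
      · rw [orbit, if_pos hb0, if_neg (by dsimp only; omega), mul_zero]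
      · rw [middle b hb0 (by omega), zero_mul]
    · simp
  have initial : g ⟨0, by omega⟩ = 0 := by
    have h := coord ⟨0, by omega⟩
    rwa [Finset.sum_eq_single ⟨0, by omega⟩, orbit, if_pos rfl, if_pos rfl, mul_one] at h
    · intro b _ hb
      simp only [ne_eq, Fin.ext_iff] at hb
      by_cases hbl : (b : ℕ) = n - 1
      · rw [show b = ⟨n - 1, by omega⟩ from Fin.ext hbl, last, zero_mul]
      · rw [middle b (by omega) (by omega), zero_mul]
    · simp
  intro k
  rcases Nat.eq_zero_or_pos (k : ℕ) with hk0 | hk0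
  · rwa [show k = ⟨0, by omega⟩ from Fin.ext hk0]
  by_cases hkl : (k : ℕ) = n - 1
  · rwa [show k = ⟨n - 1, by omega⟩ from Fin.ext hkl]
  · exact middle k hk0 (by omega)

theorem isCyclicVector_orbit_zero (hno : n % 2 = 1) :
    Module.End.IsCyclicVector (Lmap n hn) (orbit n 0) := by
  rw [Module.End.IsCyclicVector, Module.finrank_fin_fun]
  have horbit :
      (fun k : Fin n => (Lmap n hn ^ (k : ℕ)) (orbit n 0)) = fun k : Fin n => orbit n k :=
    funext fun k => pow_apply_orbit_zero hn k.isLt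
  rw [horbit]
  exact linearIndependent_orbit hno

theorem aeval_orbit_zero (hno : n % 2 = 1) :
    aeval (Lmap n hn) ((X + 1) * (X ^ (n - 1) - 1) : (ZMod 2)[X]) (orbit n 0) = 0 := by
  rw [X_add_one_mul_X_pow_sub_one]
  simp only [map_add, aeval_X_pow, aeval_X, map_one, LinearMap.add_apply, Module.End.one_apply]
  rw [pow_succ', Module.End.mul_apply, pow_apply_orbit_zero hn (by omega),
    apply_orbit hn (k := 0) (by omega)]
  exact apply_orbit_last hn hno

end Lmap

/-- For odd `n ≥ 3`, the minimal polynomial of `L_n` equals its characteristic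
polynomial, namely `(x+1)(x^{n−1} − 1)`; equivalently `L_n` is cyclic, with the
single invariant factor `(x+1)(x^{n−1} − 1)`. -/
theorem stmt7 (n : ℕ) (hn : 3 ≤ n) (hno : Odd n) :
    minpoly (ZMod 2) (Lmap n hn) = (X + 1) * (X ^ (n - 1) - 1) ∧
    minpoly (ZMod 2) (Lmap n hn) = LinearMap.charpoly (Lmap n hn) ∧
    Nonempty (Module.AEval' (Lmap n hn) ≃ₗ[Polynomial (ZMod 2)]
      Polynomial (ZMod 2) ⧸ Ideal.span
        {((X + 1) * (X ^ (n - 1) - 1) : Polynomial (ZMod 2))}) := by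
  have hno' : n % 2 = 1 := Nat.odd_iff.mp hno
  have hv := Lmap.isCyclicVector_orbit_zero hn hno'
  have hn1 : n - 1 ≠ 0 := by omega
  have hmin : minpoly (ZMod 2) (Lmap n hn) = (X + 1) * (X ^ (n - 1) - 1) := by
    refine hv.minpoly_eq (monic_X_add_one_mul_X_pow_sub_one hn1) ?_
      (Lmap.aeval_orbit_zero hn hno')
    rw [natDegree_X_add_one_mul_X_pow_sub_one hn1, Module.finrank_fin_fun]
    omega
  refine ⟨hmin, hv.minpoly_eq_charpoly, ?_⟩
  rw [← hmin]
  exact hv.nonempty_aeval'_equiv_quotient_minpoly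
end

section
/- Let n ≥ 3 and let r be a positive integer such that (2n−2)/r is an odd integer. Then in 𝔽₂[x], gcd(x^r − 1, (x+1)(x^{n−1} − 1)) = (x+1)(x^{r/2} − 1). -/
/-!
Put `s = r/2` and `k = (2n-2)/r`, so `n - 1 = s k` with `k` odd, and `c = (x+1)(x^s - 1)`.
In characteristic 2, `x^{2s} - 1 = (x^s - 1)^2 = c (1 + x + ⋯ + x^{s-1})` and
`(x+1)(x^{sk} - 1) = c (1 + x^s + ⋯ + x^{s(k-1)})`. The two cofactors are coprime: the second
is `≡ k = 1` modulo `x^s - 1`, which the first divides. So the gcd is `c` up to a unit, and the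
only unit of `𝔽₂[x]` is `1`.
-/

open Polynomial Finset

theorem sub_one_dvd_geom_sum_sub_natCast {R : Type*} [CommRing R] (x : R) (k : ℕ) :
    x - 1 ∣ ∑ i ∈ range k, x ^ i - k := by
  have hsum : ∑ i ∈ range k, x ^ i - k = ∑ i ∈ range k, (x ^ i - 1) := by
    simp [sum_sub_distrib]
  rw [hsum]
  exact dvd_sum fun i _ ↦ by simpa using sub_dvd_pow_sub_pow x 1 i

theorem isCoprime_sub_one_geom_sum {R : Type*} [CommRing R] (x : R) {k : ℕ}
    (hk : IsUnit (k : R)) : IsCoprime (x - 1) (∑ i ∈ range k, x ^ i) := by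
  obtain ⟨q, hq⟩ := sub_one_dvd_geom_sum_sub_natCast x k
  rw [sub_eq_iff_eq_add'.mp hq]
  exact IsCoprime.add_mul_left_right ⟨0, ↑hk.unit⁻¹, by simp⟩ q

theorem EuclideanDomain.gcd_mul_left_associated_of_isCoprime {R : Type*} [EuclideanDomain R]
    [DecidableEq R] (c : R) {a b : R} (h : IsCoprime a b) :
    Associated (gcd (c * a) (c * b)) c := by
  refine associated_of_dvd_dvd ?_ (dvd_gcd (dvd_mul_right c a) (dvd_mul_right c b))
  obtain ⟨u, v, huv⟩ := h
  have hc : u * (c * a) + v * (c * b) = c := by linear_combination c * huv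
  have hdvd := dvd_add ((gcd_dvd_left (c * a) (c * b)).mul_left u)
    ((gcd_dvd_right (c * a) (c * b)).mul_left v)
  rwa [hc] at hdvd

namespace CharTwo

variable {R : Type*}

theorem pow_two_mul_sub_one [CommRing R] [CharP R 2] (x : R) (s : ℕ) :
    x ^ (2 * s) - 1 = (x + 1) * (x ^ s - 1) * ∑ i ∈ range s, x ^ i := by
  have h : (x + 1) * ∑ i ∈ range s, x ^ i = x ^ s - 1 := by
    rw [← sub_eq_add, mul_geom_sum]
  linear_combination (x ^ s - 1) * two_eq_zero (R := R) - (x ^ s - 1) * h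

theorem gcd_pow_two_mul_sub_one_associated [EuclideanDomain R] [DecidableEq R] [CharP R 2]
    (x : R) (s : ℕ) {k : ℕ} (hk : Odd k) :
    Associated (EuclideanDomain.gcd (x ^ (2 * s) - 1) ((x + 1) * (x ^ (s * k) - 1)))
      ((x + 1) * (x ^ s - 1)) := by
  have hk' : IsUnit (k : R) := by
    rw [natCast_eq_one_of_odd_of_two_eq_zero hk (two_eq_zero (R := R))]
    exact isUnit_one
  have hcop : IsCoprime (∑ i ∈ range s, x ^ i) (∑ i ∈ range k, (x ^ s) ^ i) :=
    (isCoprime_sub_one_geom_sum (x ^ s) hk').of_isCoprime_of_dvd_left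
      (Dvd.intro_left _ (mul_geom_sum x s))
  rw [pow_two_mul_sub_one, pow_mul, ← mul_geom_sum (x ^ s) k, ← mul_assoc]
  exact EuclideanDomain.gcd_mul_left_associated_of_isCoprime _ hcop

end CharTwo

theorem Nat.even_of_odd_div {m r : ℕ} (hm : Even m) (hdvd : r ∣ m) (hodd : Odd (m / r)) :
    Even r := by
  rw [← Nat.div_mul_cancel hdvd, Nat.even_mul] at hm
  exact hm.resolve_left (Nat.not_even_iff_odd.mpr hodd)

noncomputable instance Polynomial.uniqueUnits {R : Type*} [CommRing R] [IsDomain R] [Unique Rˣ] :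
    Unique R[X]ˣ where
  uniq u := Units.ext <| by
    obtain ⟨r, hr, hu⟩ := Polynomial.isUnit_iff.mp u.isUnit
    rw [← hu, isUnit_iff_eq_one.mp hr, C_1]
    rfl

open scoped Classical in
theorem stmt10_general (n : ℕ) (r : ℕ)
    (hdvd : r ∣ 2 * n - 2) (hodd : Odd ((2 * n - 2) / r)) :
    EuclideanDomain.gcd (X ^ r - 1 : Polynomial (ZMod 2))
        ((X + 1) * (X ^ (n - 1) - 1)) =
      (X + 1) * (X ^ (r / 2) - 1) := by
  obtain ⟨s, rfl⟩ : 2 ∣ r :=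
    (Nat.even_of_odd_div ⟨n - 1, by omega⟩ hdvd hodd).two_dvd
  have hn : n - 1 = s * ((2 * n - 2) / (2 * s)) := by
    have hmul := Nat.mul_div_cancel' hdvd
    rw [mul_assoc] at hmul
    omega
  rw [Nat.mul_div_cancel_left s two_pos, hn]
  exact associated_iff_eq.mp (CharTwo.gcd_pow_two_mul_sub_one_associated X s hodd)

open scoped Classical in
theorem stmt10 (n : ℕ) (hn : 3 ≤ n) (r : ℕ) (hr : 0 < r)
    (hdvd : r ∣ 2 * n - 2) (hodd : Odd ((2 * n - 2) / r)) :
    EuclideanDomain.gcd (X ^ r - 1 : Polynomial (ZMod 2))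
        ((X + 1) * (X ^ (n - 1) - 1)) =
      (X + 1) * (X ^ (r / 2) - 1) :=
  stmt10_general n r hdvd hodd
end

section
/- Let n ≥ 3 be odd and let r be a positive integer such that (2n−2)/r is an odd integer. Then in 𝔽₂[x], gcd(x^r − 1, (x+1)²(x^{n−1} − 1)) = (x+1)²(x^{r/2} − 1). -/
open Polynomial

/-!
Write `r = 2s` and `n - 1 = s k`; the parity hypotheses force `s` even and `k` odd.
In characteristic two `X^r - 1 = (X^s - 1)^2`, and `(X + 1)^2 ∣ X^s - 1` because `s` is even.
Since `k` is odd, `X^{sk} - 1 ≡ k (X^s - 1) = X^s - 1` modulo `(X^s - 1)^2`, so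
`(X + 1)^2 (X^s - 1)` is a combination of the two arguments of the gcd as well as a common
divisor of them.
-/

theorem exists_eq_two_mul_even_of_two_mul_eq_mul_odd {m r k : ℕ} (hm : Even m) (hk : Odd k)
    (h : 2 * m = r * k) : ∃ s, r = 2 * s ∧ Even s ∧ m = s * k := by
  have hrk : Even (r * k) := h ▸ even_two_mul m
  obtain ⟨s, rfl⟩ := (Nat.even_mul.mp hrk).resolve_right (Nat.not_even_iff_odd.mpr hk)
  have hm' : m = s * k := by linarith
  refine ⟨s, (two_mul s).symm, ?_, hm'⟩
  simpa [hm', Nat.even_mul, Nat.not_even_iff_odd.mpr hk] using hm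

theorem sub_one_sq_dvd_pow_sub_one_sub_natCast_mul {R : Type*} [CommRing R] (y : R) (k : ℕ) :
    (y - 1) ^ 2 ∣ y ^ k - 1 - k * (y - 1) := by
  simpa [mul_comm, sub_right_comm] using sq_dvd_add_pow_sub_sub (y - 1) 1 k

theorem CharTwo.add_one_sq_dvd_pow_sub_one {R : Type*} [CommRing R] [CharP R 2] (y : R)
    {s : ℕ} (hs : Even s) : (y + 1) ^ 2 ∣ y ^ s - 1 := by
  obtain ⟨t, rfl⟩ := hs
  have hsq : y ^ (t + t) - 1 = (y ^ t - 1) ^ 2 := by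
    rw [← two_mul, pow_mul', CharTwo.sub_eq_add, CharTwo.sub_eq_add, CharTwo.add_sq, one_pow]
  rw [hsq, ← CharTwo.sub_eq_add]
  exact pow_dvd_pow_of_dvd (sub_one_dvd_pow_sub_one y t) 2

theorem EuclideanDomain.associated_gcd_of_dvd_of_eq_mul_add_mul {R : Type*} [EuclideanDomain R]
    [DecidableEq R] {a b g : R} (u v : R) (ha : g ∣ a) (hb : g ∣ b) (hg : g = u * a + v * b) :
    Associated (gcd a b) g :=
  associated_of_dvd_dvd
    (hg ▸ dvd_add ((gcd_dvd_left a b).mul_left u) ((gcd_dvd_right a b).mul_left v))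
    (dvd_gcd ha hb)

theorem CharTwo.associated_gcd_sq_sub_one_mul_pow_sub_one {R : Type*} [EuclideanDomain R]
    [DecidableEq R] [CharP R 2] {y c : R} {k : ℕ} (hk : Odd k) (hc : c ∣ y - 1) :
    Associated (EuclideanDomain.gcd (y ^ 2 - 1) (c * (y ^ k - 1))) (c * (y - 1)) := by
  have hsq : y ^ 2 - 1 = (y - 1) ^ 2 := by
    rw [CharTwo.sub_eq_add, CharTwo.sub_eq_add, CharTwo.add_sq, one_pow]
  obtain ⟨d, hd⟩ := sub_one_sq_dvd_pow_sub_one_sub_natCast_mul y k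
  rw [natCast_eq_one_of_odd_of_two_eq_zero hk CharTwo.two_eq_zero, one_mul] at hd
  refine EuclideanDomain.associated_gcd_of_dvd_of_eq_mul_add_mul (-(c * d)) 1 ?_ ?_ ?_
  · rw [hsq, sq]
    exact mul_dvd_mul hc dvd_rfl
  · exact mul_dvd_mul_left c (sub_one_dvd_pow_sub_one y k)
  · linear_combination -c * hd + c * d * hsq

theorem Polynomial.eq_of_associated_zmod_two {p q : (ZMod 2)[X]} (h : Associated p q) :
    p = q := by
  obtain ⟨u, rfl⟩ := h
  obtain ⟨a, ha, hCa⟩ := Polynomial.isUnit_iff.mp u.isUnit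
  have ha1 : a = 1 := by
    fin_cases a
    exacts [absurd ha not_isUnit_zero, rfl]
  rw [← hCa, ha1, map_one, mul_one]

open scoped Classical in
theorem stmt11_general (n : ℕ) (hno : Odd n) (r : ℕ) (hr : 0 < r)
    (hdvd : r ∣ 2 * n - 2) (hodd : Odd ((2 * n - 2) / r)) :
    EuclideanDomain.gcd (X ^ r - 1 : Polynomial (ZMod 2))
        ((X + 1) ^ 2 * (X ^ (n - 1) - 1)) =
      (X + 1) ^ 2 * (X ^ (r / 2) - 1) := by
  obtain ⟨k, hk⟩ := hdvd
  rw [hk, Nat.mul_div_cancel_left k hr] at hodd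
  have hn1 : Even (n - 1) := hno.tsub_odd odd_one
  obtain ⟨s, rfl, hs, hsk⟩ :=
    exists_eq_two_mul_even_of_two_mul_eq_mul_odd hn1 hodd (by omega : 2 * (n - 1) = r * k)
  rw [Nat.mul_div_cancel_left s two_pos, hsk, pow_mul', pow_mul]
  exact Polynomial.eq_of_associated_zmod_two <|
    CharTwo.associated_gcd_sq_sub_one_mul_pow_sub_one hodd
      (CharTwo.add_one_sq_dvd_pow_sub_one X hs)

open scoped Classical in
theorem stmt11 (n : ℕ) (hn : 3 ≤ n) (hno : Odd n) (r : ℕ) (hr : 0 < r)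
    (hdvd : r ∣ 2 * n - 2) (hodd : Odd ((2 * n - 2) / r)) :
    EuclideanDomain.gcd (X ^ r - 1 : Polynomial (ZMod 2))
        ((X + 1) ^ 2 * (X ^ (n - 1) - 1)) =
      (X + 1) ^ 2 * (X ^ (r / 2) - 1) :=
  stmt11_general n hno r hr hdvd hodd
end

section
/- Let n ≥ 3 be even, let L_n : 𝔽₂ⁿ → 𝔽₂ⁿ be the linear map L_n(y₁,...,y_n) = (y₁+y₂+y_n, ..., y₁+y_{n−1}+y_n, y₁, y₂), and let r be a positive integer dividing n−1. Then the set of fixed points of L_n^r is an 𝔽₂-vector subspace of dimension r+1; in particular L_n^r has exactly 2^{r+1} fixed points. -/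
open Function

theorem Function.Periodic.of_add_eq_of_lt {α : Type*} {f : ℕ → α} {m r : ℕ} (hf : Periodic f m)
    (h : ∀ i < m, f (i + r) = f i) (hm : 0 < m) : Periodic f r := fun i => by
  rw [← hf.map_mod_nat, ← Nat.mod_add_mod, hf.map_mod_nat, h _ (Nat.mod_lt i hm), hf.map_mod_nat]

theorem exists_periodic_restrict_eq {R : Type*} {n : ℕ} (hn : 2 ≤ n) {z : Fin n → R}
    (hz : z ⟨n - 1, by omega⟩ = z ⟨0, by omega⟩) :
    ∃ f : ℕ → R, Periodic f (n - 1) ∧ (fun i : Fin n => f i) = z := by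
  refine ⟨fun j => z ⟨j % (n - 1), by have := Nat.mod_lt j (by omega : 0 < n - 1); omega⟩,
    fun j => by simp, ?_⟩
  funext ⟨i, hi⟩
  rcases Nat.lt_or_ge i (n - 1) with hlt | hge
  · simp [Nat.mod_eq_of_lt hlt]
  · obtain rfl : i = n - 1 := by omega
    simp [hz]

theorem natCast_sub_one_of_even {n : ℕ} (hn : 0 < n) (hne : Even n) :
    ((n - 1 : ℕ) : ZMod 2) = 1 :=
  ZMod.natCast_eq_one_iff_odd.2 (Nat.Even.sub_odd hn hne odd_one)

def parityVec (n : ℕ) : Fin n → ZMod 2 := fun i => (i : ℕ)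

def periodize {R : Type*} [Semiring R] (n : ℕ) {r : ℕ} (hr : 0 < r) :
    (Fin r → R) →ₗ[R] (Fin n → R) :=
  LinearMap.funLeft R R fun i => ⟨i % r, Nat.mod_lt _ hr⟩

def fixedPointsParam (n : ℕ) {r : ℕ} (hr : 0 < r) :
    (Fin r → ZMod 2) × ZMod 2 →ₗ[ZMod 2] (Fin n → ZMod 2) :=
  (periodize n hr).coprod (LinearMap.toSpanSingleton _ _ (parityVec n))

theorem fixedPointsParam_injective {n r : ℕ} (hn : 2 ≤ n) (hne : Even n) (hr : 0 < r)
    (hdvd : r ∣ n - 1) : Injective (fixedPointsParam n hr) := by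
  have hrn : r ≤ n - 1 := Nat.le_of_dvd (by omega) hdvd
  rw [← LinearMap.ker_eq_bot, LinearMap.ker_eq_bot']
  rintro ⟨a, c⟩ h
  have happ (i : ℕ) (hi : i < n) : a ⟨i % r, Nat.mod_lt _ hr⟩ + c * (i : ZMod 2) = 0 := by
    simpa [fixedPointsParam, periodize, parityVec] using congrFun h ⟨i, hi⟩
  have ha0 : a ⟨0, hr⟩ = 0 := by simpa using happ 0 (by omega)
  have hc : c = 0 := by
    simpa [Nat.mod_eq_zero_of_dvd hdvd, natCast_sub_one_of_even (by omega) hne, ha0]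
      using happ (n - 1) (by omega)
  refine Prod.ext (funext fun j => ?_) hc
  simpa [Nat.mod_eq_of_lt j.2, hc] using happ j (by omega)

section Lmap

variable {n : ℕ} (hn : 3 ≤ n)

theorem Lmap_restrict_of_periodic {f : ℕ → ZMod 2} (hf : Periodic f (n - 1)) :
    Lmap n hn (fun i : Fin n => f i) = fun i : Fin n => f (i + 1) := by
  have hf0 : f (n - 1) = f 0 := by simpa using hf 0
  funext ⟨i, hi⟩
  simp only [Lmap, LinearMap.coe_mk, AddHom.coe_mk]
  split_ifs with hlt hmid
  · rw [hf0]; ring_nf; reduce_mod_char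
  · rw [hmid, show n - 2 + 1 = n - 1 by omega, hf0]
  · rw [show i = n - 1 by omega, Nat.sub_add_cancel (by omega : 1 ≤ n), ← hf 1]
    congr 1; omega

theorem Lmap_pow_restrict_of_periodic {f : ℕ → ZMod 2} (hf : Periodic f (n - 1)) (k : ℕ) :
    (Lmap n hn ^ k) (fun i : Fin n => f i) = fun i : Fin n => f (i + k) := by
  induction k generalizing f with
  | zero => rfl
  | succ k ih =>
    rw [pow_succ, Module.End.mul_apply, Lmap_restrict_of_periodic hn hf, ih (hf.add_const 1)]
    simp only [add_assoc]

theorem Lmap_pow_restrict_of_periodic_of_dvd {f : ℕ → ZMod 2} {r : ℕ} (hf : Periodic f r)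
    (hdvd : r ∣ n - 1) : (Lmap n hn ^ r) (fun i : Fin n => f i) = fun i : Fin n => f i := by
  obtain ⟨q, hq⟩ := hdvd
  have hf' : Periodic f (n - 1) := by simpa [hq, mul_comm] using hf.nat_mul q
  rw [Lmap_pow_restrict_of_periodic hn hf']
  exact funext fun i => hf i

theorem Lmap_parityVec (hne : Even n) : Lmap n hn (parityVec n) = parityVec n := by
  have hodd := natCast_sub_one_of_even (by omega) hne
  funext ⟨i, hi⟩
  simp only [Lmap, parityVec, LinearMap.coe_mk, AddHom.coe_mk]
  split_ifs with hlt hmid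
  · rw [hodd]; push_cast; ring_nf; reduce_mod_char
  · rw [hmid, Nat.cast_zero, eq_comm, ZMod.natCast_eq_zero_iff_even]
    exact hne.tsub even_two
  · rw [show i = n - 1 by omega, hodd, Nat.cast_one]

theorem Lmap_pow_parityVec (hne : Even n) (k : ℕ) : (Lmap n hn ^ k) (parityVec n) = parityVec n := by
  rw [Module.End.pow_apply]
  exact iterate_fixed (Lmap_parityVec hn hne) k

variable {r : ℕ} (hr : 0 < r)

theorem Lmap_pow_fixedPointsParam (hdvd : r ∣ n - 1) (hne : Even n) (p : (Fin r → ZMod 2) × ZMod 2) :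
    (Lmap n hn ^ r) (fixedPointsParam n hr p) = fixedPointsParam n hr p := by
  have hper : Periodic (fun j : ℕ => p.1 ⟨j % r, Nat.mod_lt _ hr⟩) r := fun j => by simp
  rw [fixedPointsParam, LinearMap.coprod_apply, map_add, LinearMap.toSpanSingleton_apply, map_smul,
    Lmap_pow_parityVec hn hne]
  congr 1
  exact Lmap_pow_restrict_of_periodic_of_dvd hn hper hdvd

theorem exists_fixedPointsParam_eq_of_Lmap_pow (hne : Even n) {y : Fin n → ZMod 2}
    (hy : (Lmap n hn ^ r) y = y) : ∃ p, fixedPointsParam n hr p = y := by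
  set c := y ⟨n - 1, by omega⟩ - y ⟨0, by omega⟩
  set z := y - c • parityVec n with hz_def
  have hz : (Lmap n hn ^ r) z = z := by
    rw [hz_def, map_sub, map_smul, hy, Lmap_pow_parityVec hn hne]
  have hodd := natCast_sub_one_of_even (by omega) hne
  obtain ⟨f, hf, hfz⟩ := exists_periodic_restrict_eq (by omega : 2 ≤ n) (z := z)
    (by simp [z, c, parityVec, hodd])
  have hshift : (fun i : Fin n => f (i + r)) = fun i : Fin n => f i := by
    rw [← Lmap_pow_restrict_of_periodic hn hf, hfz]
    exact hz
  have hfr : Periodic f r :=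
    hf.of_add_eq_of_lt (fun i hi => congrFun hshift ⟨i, by omega⟩) (by omega)
  have hzper : periodize n hr (fun j => f j) = z := by
    rw [← hfz]
    exact funext fun i => hfr.map_mod_nat i
  refine ⟨(fun j => f j, c), ?_⟩
  rw [fixedPointsParam, LinearMap.coprod_apply, LinearMap.toSpanSingleton_apply, hzper, hz_def,
    sub_add_cancel]

theorem ker_Lmap_pow_sub_id_eq_range (hdvd : r ∣ n - 1) (hne : Even n) :
    LinearMap.ker (Lmap n hn ^ r - LinearMap.id) = LinearMap.range (fixedPointsParam n hr) := by
  ext y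
  rw [LinearMap.mem_ker, LinearMap.sub_apply, LinearMap.id_apply, sub_eq_zero, LinearMap.mem_range]
  exact ⟨exists_fixedPointsParam_eq_of_Lmap_pow hn hr hne,
    by rintro ⟨p, rfl⟩; exact Lmap_pow_fixedPointsParam hn hr hdvd hne p⟩

end Lmap

/-- For even `n ≥ 3` and `r ∣ n−1`, the fixed points of `L_n^r` form an
`𝔽₂`-subspace of dimension `r+1`; in particular there are exactly `2^{r+1}` of them. -/
theorem stmt13 (n : ℕ) (hn : 3 ≤ n) (hne : Even n) (r : ℕ) (hr : 0 < r)
    (hdvd : r ∣ n - 1) :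
    Module.finrank (ZMod 2) (LinearMap.ker (Lmap n hn ^ r - LinearMap.id)) = r + 1 ∧
    Nat.card {v : Fin n → ZMod 2 | (Lmap n hn ^ r) v = v} = 2 ^ (r + 1) := by
  have hrank : Module.finrank (ZMod 2) (LinearMap.ker (Lmap n hn ^ r - LinearMap.id)) = r + 1 := by
    rw [ker_Lmap_pow_sub_id_eq_range hn hr hdvd hne,
      LinearMap.finrank_range_of_inj (fixedPointsParam_injective (by omega) hne hr hdvd)]
    simp
  have hset : {v : Fin n → ZMod 2 | (Lmap n hn ^ r) v = v} =
      (LinearMap.ker (Lmap n hn ^ r - LinearMap.id) : Set (Fin n → ZMod 2)) :=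
    Set.ext fun v => by simp [sub_eq_zero]
  refine ⟨hrank, ?_⟩
  rw [hset, SetLike.coe_sort_coe, Module.natCard_eq_pow_finrank (K := ZMod 2), hrank, Nat.card_zmod]
end

section
/- Let n ≥ 3 and define T_n : 𝔽₂ⁿ → 𝔽₂ⁿ as the SDS map [C_n, (1+parity)₃, id], i.e., T_n(v) = L_n(v) + u_n where L_n(y₁,...,y_n) = (y₁+y₂+y_n, ..., y₁+y_{n−1}+y_n, y₁, y₂) and u_n = (γ₁, γ₂, ..., γ_{n−1}, γ_{n−1}) with γᵢ = 1 if i is odd and γᵢ = 0 if i is even. Then T_n has a fixed point if and only if 4 divides n. -/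
/-- The translation vector `u_n = (γ₁, …, γ_{n−1}, γ_{n−1})`, where `γᵢ = 1` iff
`i` is odd (entries indexed from 1). -/
def uVec (n : ℕ) : Fin n → ZMod 2 := fun j =>
  if (j : ℕ) < n - 1 then (if Odd ((j : ℕ) + 1) then 1 else 0)
  else (if Odd (n - 1) then 1 else 0)

/-- The coordinates `i < n - 2`, `i = n - 2` and `i = n - 1` of `L_n x + u_n = x`, for a
vector given by its 0-indexed coordinates `x 0, …, x (n - 1)`. -/
def FixedPointEqs (n : ℕ) (x : ℕ → ZMod 2) : Prop :=
  (∀ i < n - 2, x 0 + x (i + 1) + x (n - 1) + (if Even i then 1 else 0) = x i) ∧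
  x 0 + (if Odd (n - 1) then 1 else 0) = x (n - 2) ∧
  x 1 + (if Odd (n - 1) then 1 else 0) = x (n - 1)

theorem Lmap_add_uVec_eq_self_iff {n : ℕ} (hn : 3 ≤ n) (x : ℕ → ZMod 2) :
    Lmap n hn (fun i : Fin n => x i) + uVec n = (fun i : Fin n => x i) ↔ FixedPointEqs n x := by
  have hpar : Even (n - 2) ↔ Odd (n - 1) := by
    rw [show n - 1 = n - 2 + 1 by omega, Nat.odd_add_one, Nat.not_odd_iff_even]
  have hpen_lt : n - 2 < n - 1 := by omega
  have hlast_ne : ¬n - 1 < n - 2 ∧ n - 1 ≠ n - 2 := by omega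
  simp only [funext_iff, Fin.forall_iff, Pi.add_apply, Lmap, uVec, LinearMap.coe_mk,
    AddHom.coe_mk, Nat.odd_add_one, Nat.not_odd_iff_even]
  constructor
  · intro h
    refine ⟨fun i hi => ?_, ?_, ?_⟩
    · simpa [hi, show i < n - 1 by omega] using h i (by omega)
    · simpa [hpen_lt, hpar] using h (n - 2) (by omega)
    · simpa [hlast_ne] using h (n - 1) (by omega)
  · rintro ⟨hstep, hpen, hlast⟩ i -
    obtain hi | rfl | rfl : i < n - 2 ∨ i = n - 2 ∨ i = n - 1 := by omega
    · simpa [hi, show i < n - 1 by omega] using hstep i hi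
    · simpa [hpen_lt, hpar] using hpen
    · simpa [hlast_ne] using hlast

namespace FixedPointEqs

variable {n : ℕ} {x : ℕ → ZMod 2}

theorem odd_sub_one (h : FixedPointEqs n x) (hn : 3 ≤ n) : Odd (n - 1) := by
  by_contra hodd
  have h0 := h.1 0 (by omega)
  have hlast := h.2.2
  simp only [hodd, Even.zero, if_true, if_false] at h0 hlast
  grind

theorem add_two (h : FixedPointEqs n x) {i : ℕ} (hi : Even i) (hin : i + 2 ≤ n - 2) :
    x (i + 2) = x i + 1 := by
  have h1 := h.1 i (by omega)
  have h2 := h.1 (i + 1) (by omega)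
  simp only [hi, Nat.even_add_one, not_true, if_true, if_false] at h1 h2
  grind

theorem even_index (h : FixedPointEqs n x) (j : ℕ) (hj : 2 * j ≤ n - 2) :
    x (2 * j) = x 0 + j := by
  induction j with
  | zero => simp
  | succ j ih =>
    rw [Nat.mul_succ, h.add_two (even_two_mul j) (by omega), ih (by omega)]
    push_cast; ring

theorem four_dvd (h : FixedPointEqs n x) (hn : 3 ≤ n) : 4 ∣ n := by
  obtain ⟨m, hm⟩ := h.odd_sub_one hn
  have hpen := h.2.1
  rw [if_pos ⟨m, hm⟩, show n - 2 = 2 * m by omega, h.even_index m (by omega),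
    add_right_inj, eq_comm, ZMod.natCast_eq_one_iff_odd] at hpen
  obtain ⟨k, rfl⟩ := hpen
  exact ⟨k + 1, by omega⟩

end FixedPointEqs

def fourPeriodic (k : ℕ) : ZMod 2 := if k % 4 = 1 ∨ k % 4 = 2 then 0 else 1

theorem fixedPointEqs_fourPeriodic {n : ℕ} (hn : 0 < n) (h : 4 ∣ n) :
    FixedPointEqs n fourPeriodic := by
  simp only [FixedPointEqs, fourPeriodic, Nat.even_iff, Nat.odd_iff]
  refine ⟨fun i hi => ?_, ?_, ?_⟩ <;> split_ifs <;> first | decide | omega | simp_all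

/-- The SDS map `[C_n, (1+parity)₃, id]`, i.e. `T_n(v) = L_n(v) + u_n`, has a
fixed point if and only if `4 ∣ n`. -/
theorem stmt17 (n : ℕ) (hn : 3 ≤ n) :
    (∃ c : Fin n → ZMod 2, Lmap n hn c + uVec n = c) ↔ 4 ∣ n := by
  constructor
  · rintro ⟨c, hc⟩
    set x : ℕ → ZMod 2 := fun k => if h : k < n then c ⟨k, h⟩ else 0
    have hcx : c = fun i : Fin n => x i := funext fun i => by simp [x, i.isLt]
    rw [hcx, Lmap_add_uVec_eq_self_iff] at hc
    exact hc.four_dvd hn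
  · intro h
    exact ⟨_, (Lmap_add_uVec_eq_self_iff hn _).2 (fixedPointEqs_fourPeriodic (by omega) h)⟩
end
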